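/- arXiv:2001.06448 — 3 statements merged into one kernel-verified Lean document; each statement's English description precedes it below -/
import Mathlib

section
/- Let 𝒰 and 𝒱 be finite types, p a joint probability mass function on 𝒰 × 𝒱 with marginals p_U, p_V, and q a model joint probability mass function on 𝒰 × 𝒱 with marginals q_U, q_V, such that q(u,v) > 0 whenever p(u,v) > 0, q_U(u) > 0 whenever p_U(u) > 0, and q_V(v) > 0 whenever p_V(v) > 0. Then |CI(U,V) − I(U,V)| ≤ D(p‖q) + D(p_U‖q_U) + D(p_V‖q_V) ≤ 3·max(D(p‖q), D(p_U‖q_U), D(p_V‖q_V)). -/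
open Finset

/-- Mutual information `I(U,V)` of a joint pmf `p` on `U × V` with marginals `pU`, `pV`. -/
noncomputable def mutualInfo {U V : Type*} [Fintype U] [Fintype V]
    (p : U × V → ℝ) (pU : U → ℝ) (pV : V → ℝ) : ℝ :=
  ∑ uv : U × V, p uv * Real.log (p uv / (pU uv.1 * pV uv.2))

/-- Mutual cross-information `CI(U,V)`: expectation under `p` of the log density ratio
of the model joint `q` to the product of its marginals `qU`, `qV`. -/
noncomputable def crossInfo {U V : Type*} [Fintype U] [Fintype V]
    (p : U × V → ℝ) (q : U × V → ℝ) (qU : U → ℝ) (qV : V → ℝ) : ℝ :=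
  ∑ uv : U × V, p uv * Real.log (q uv / (qU uv.1 * qV uv.2))

/-- Kullback–Leibler divergence `D(p‖q)` between pmfs on a finite type. -/
noncomputable def klDiv {X : Type*} [Fintype X] (p q : X → ℝ) : ℝ :=
  ∑ x, p x * Real.log (p x / q x)

/-!
The log-ratios telescope: for every pair `(u, v)` in the support of `p`,
`log (q / (q_U q_V)) - log (p / (p_U p_V)) + log (p / q) = log (p_U / q_U) + log (p_V / q_V)`.
Averaging over `p` gives `CI - I + D(p‖q) = D(p_U‖q_U) + D(p_V‖q_V)`, and the bounds follow
because all three divergences are nonnegative (Gibbs' inequality).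
-/

open Real

lemma sub_le_mul_log_div {a b : ℝ} (ha : 0 ≤ a) (hb : 0 ≤ b) (hab : 0 < a → 0 < b) :
    a - b ≤ a * log (a / b) := by
  rcases ha.eq_or_lt with rfl | ha
  · simpa using hb
  have hb := hab ha
  have h := one_sub_inv_le_log_of_pos (div_pos ha hb)
  rw [inv_div] at h
  calc a - b = a * (1 - b / a) := by field_simp
    _ ≤ a * log (a / b) := mul_le_mul_of_nonneg_left h ha.le

lemma klDiv_nonneg {X : Type*} [Fintype X] {p q : X → ℝ} (hp0 : ∀ x, 0 ≤ p x)
    (hq0 : ∀ x, 0 ≤ q x) (hpq : ∑ x, q x ≤ ∑ x, p x) (hdom : ∀ x, 0 < p x → 0 < q x) :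
    0 ≤ klDiv p q := by
  have h := sum_le_sum fun x (_ : x ∈ univ) => sub_le_mul_log_div (hp0 x) (hq0 x) (hdom x)
  rw [sum_sub_distrib] at h
  unfold klDiv
  linarith

lemma add_add_le_three_mul_max {α : Type*} [Field α] [LinearOrder α] [IsStrictOrderedRing α]
    (a b c : α) : a + b + c ≤ 3 * max a (max b c) := by
  linarith [le_max_left a (max b c), le_max_right a (max b c), le_max_left b c, le_max_right b c]

lemma log_ratio_telescope {a b a₁ a₂ b₁ b₂ : ℝ} (ha : a ≠ 0) (hb : b ≠ 0)
    (ha₁ : a₁ ≠ 0) (ha₂ : a₂ ≠ 0) (hb₁ : b₁ ≠ 0) (hb₂ : b₂ ≠ 0) :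
    log (b / (b₁ * b₂)) - log (a / (a₁ * a₂)) + log (a / b) =
      log (a₁ / b₁) + log (a₂ / b₂) := by
  rw [log_div hb (mul_ne_zero hb₁ hb₂), log_div ha (mul_ne_zero ha₁ ha₂), log_div ha hb,
    log_div ha₁ hb₁, log_div ha₂ hb₂, log_mul hb₁ hb₂, log_mul ha₁ ha₂]
  ring

section Marginals

variable {U V : Type*}

def fstMarginal [Fintype V] (p : U × V → ℝ) (u : U) : ℝ := ∑ v, p (u, v)

def sndMarginal [Fintype U] (p : U × V → ℝ) (v : V) : ℝ := ∑ u, p (u, v)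

lemma sum_fstMarginal [Fintype U] [Fintype V] (p : U × V → ℝ) :
    ∑ u, fstMarginal p u = ∑ uv, p uv :=
  (Fintype.sum_prod_type p).symm

lemma sum_sndMarginal [Fintype U] [Fintype V] (p : U × V → ℝ) :
    ∑ v, sndMarginal p v = ∑ uv, p uv :=
  (Fintype.sum_prod_type_right p).symm

lemma sum_mul_fst [Fintype U] [Fintype V] (p : U × V → ℝ) (f : U → ℝ) :
    ∑ uv, p uv * f uv.1 = ∑ u, fstMarginal p u * f u := by
  simp only [Fintype.sum_prod_type, fstMarginal, sum_mul]

lemma sum_mul_snd [Fintype U] [Fintype V] (p : U × V → ℝ) (g : V → ℝ) :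
    ∑ uv, p uv * g uv.2 = ∑ v, sndMarginal p v * g v := by
  simp only [Fintype.sum_prod_type_right, sndMarginal, sum_mul]

variable {p q : U × V → ℝ}

lemma fstMarginal_nonneg [Fintype V] (hp0 : ∀ uv, 0 ≤ p uv) (u : U) : 0 ≤ fstMarginal p u :=
  sum_nonneg fun v _ => hp0 (u, v)

lemma sndMarginal_nonneg [Fintype U] (hp0 : ∀ uv, 0 ≤ p uv) (v : V) : 0 ≤ sndMarginal p v :=
  sum_nonneg fun u _ => hp0 (u, v)

lemma le_fstMarginal [Fintype V] (hp0 : ∀ uv, 0 ≤ p uv) (u : U) (v : V) :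
    p (u, v) ≤ fstMarginal p u :=
  single_le_sum (fun v _ => hp0 (u, v)) (mem_univ v)

lemma le_sndMarginal [Fintype U] (hp0 : ∀ uv, 0 ≤ p uv) (u : U) (v : V) :
    p (u, v) ≤ sndMarginal p v :=
  single_le_sum (fun u _ => hp0 (u, v)) (mem_univ u)

lemma fstMarginal_pos_of_pos [Fintype V] (hq0 : ∀ uv, 0 ≤ q uv)
    (hdom : ∀ uv, 0 < p uv → 0 < q uv) {u : U} (hu : 0 < fstMarginal p u) :
    0 < fstMarginal q u := by
  obtain ⟨v, -, hv⟩ := exists_lt_of_sum_lt (s := univ) (f := 0) (g := fun v => p (u, v))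
    (by simpa [fstMarginal] using hu)
  exact (hdom _ hv).trans_le (le_fstMarginal hq0 u v)

lemma sndMarginal_pos_of_pos [Fintype U] (hq0 : ∀ uv, 0 ≤ q uv)
    (hdom : ∀ uv, 0 < p uv → 0 < q uv) {v : V} (hv : 0 < sndMarginal p v) :
    0 < sndMarginal q v := by
  obtain ⟨u, -, hu⟩ := exists_lt_of_sum_lt (s := univ) (f := 0) (g := fun u => p (u, v))
    (by simpa [sndMarginal] using hv)
  exact (hdom _ hu).trans_le (le_sndMarginal hq0 u v)

theorem crossInfo_sub_mutualInfo_add_klDiv [Fintype U] [Fintype V]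
    (hp0 : ∀ uv, 0 ≤ p uv) (hq0 : ∀ uv, 0 ≤ q uv)
    (hdom : ∀ uv, 0 < p uv → 0 < q uv) :
    crossInfo p q (fstMarginal q) (sndMarginal q)
        - mutualInfo p (fstMarginal p) (sndMarginal p) + klDiv p q =
      klDiv (fstMarginal p) (fstMarginal q) + klDiv (sndMarginal p) (sndMarginal q) := by
  unfold crossInfo mutualInfo klDiv
  rw [← sum_mul_fst, ← sum_mul_snd, ← sum_sub_distrib, ← sum_add_distrib,
    ← sum_add_distrib]
  refine sum_congr rfl fun ⟨u, v⟩ _ => ?_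
  rcases (hp0 (u, v)).eq_or_lt with h0 | h0
  · simp [← h0]
  have hq := hdom _ h0
  have hpU := h0.trans_le (le_fstMarginal hp0 u v)
  have hpV := h0.trans_le (le_sndMarginal hp0 u v)
  have hqU := hq.trans_le (le_fstMarginal hq0 u v)
  have hqV := hq.trans_le (le_sndMarginal hq0 u v)
  rw [← mul_sub, ← mul_add, ← mul_add, log_ratio_telescope h0.ne' hq.ne' hpU.ne' hpV.ne'
    hqU.ne' hqV.ne']

end Marginals

theorem abs_crossInfo_sub_mutualInfo_le_general {U V : Type*} [Fintype U] [Fintype V]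
    (p q : U × V → ℝ) (pU qU : U → ℝ) (pV qV : V → ℝ)
    (hp0 : ∀ uv, 0 ≤ p uv) (hp1 : ∑ uv : U × V, p uv = 1)
    (hq0 : ∀ uv, 0 ≤ q uv) (hq1 : ∑ uv : U × V, q uv = 1)
    (hpU : ∀ u, pU u = ∑ v, p (u, v)) (hpV : ∀ v, pV v = ∑ u, p (u, v))
    (hqU : ∀ u, qU u = ∑ v, q (u, v)) (hqV : ∀ v, qV v = ∑ u, q (u, v))
    (hqpos : ∀ uv, 0 < p uv → 0 < q uv) :
    |crossInfo p q qU qV - mutualInfo p pU pV| ≤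
        klDiv p q + klDiv pU qU + klDiv pV qV ∧
      klDiv p q + klDiv pU qU + klDiv pV qV ≤
        3 * max (klDiv p q) (max (klDiv pU qU) (klDiv pV qV)) := by
  obtain rfl : pU = fstMarginal p := funext hpU
  obtain rfl : pV = sndMarginal p := funext hpV
  obtain rfl : qU = fstMarginal q := funext hqU
  obtain rfl : qV = sndMarginal q := funext hqV
  have hD : 0 ≤ klDiv p q := klDiv_nonneg hp0 hq0 (by rw [hp1, hq1]) hqpos
  have hDU : 0 ≤ klDiv (fstMarginal p) (fstMarginal q) :=
    klDiv_nonneg (fstMarginal_nonneg hp0) (fstMarginal_nonneg hq0)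
      (by rw [sum_fstMarginal, sum_fstMarginal, hp1, hq1])
      fun _ => fstMarginal_pos_of_pos hq0 hqpos
  have hDV : 0 ≤ klDiv (sndMarginal p) (sndMarginal q) :=
    klDiv_nonneg (sndMarginal_nonneg hp0) (sndMarginal_nonneg hq0)
      (by rw [sum_sndMarginal, sum_sndMarginal, hp1, hq1])
      fun _ => sndMarginal_pos_of_pos hq0 hqpos
  have key := crossInfo_sub_mutualInfo_add_klDiv hp0 hq0 hqpos
  exact ⟨abs_le.2 ⟨by linarith, by linarith⟩, add_add_le_three_mul_max _ _ _⟩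

theorem abs_crossInfo_sub_mutualInfo_le {U V : Type*} [Fintype U] [Fintype V]
    (p q : U × V → ℝ) (pU qU : U → ℝ) (pV qV : V → ℝ)
    (hp0 : ∀ uv, 0 ≤ p uv) (hp1 : ∑ uv : U × V, p uv = 1)
    (hq0 : ∀ uv, 0 ≤ q uv) (hq1 : ∑ uv : U × V, q uv = 1)
    (hpU : ∀ u, pU u = ∑ v, p (u, v)) (hpV : ∀ v, pV v = ∑ u, p (u, v))
    (hqU : ∀ u, qU u = ∑ v, q (u, v)) (hqV : ∀ v, qV v = ∑ u, q (u, v))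
    (hqpos : ∀ uv, 0 < p uv → 0 < q uv)
    (hqUpos : ∀ u, 0 < pU u → 0 < qU u)
    (hqVpos : ∀ v, 0 < pV v → 0 < qV v) :
    |crossInfo p q qU qV - mutualInfo p pU pV| ≤
        klDiv p q + klDiv pU qU + klDiv pV qV ∧
      klDiv p q + klDiv pU qU + klDiv pV qV ≤
        3 * max (klDiv p q) (max (klDiv pU qU) (klDiv pV qV)) :=
  abs_crossInfo_sub_mutualInfo_le_general p q pU qU pV qV hp0 hp1 hq0 hq1 hpU hpV hqU hqV hqpos
end

section
/- Let 𝒰 and 𝒱 be finite types and p a joint probability mass function on 𝒰 × 𝒱 with marginals p_U, p_V. Let q_U be a probability mass function on 𝒰 with q_U(u) > 0 whenever p_U(u) > 0, and define the model joint q(u,v) := q_U(u)·p(v|u), where p(v|u) := p(u,v)/p_U(u) is the true conditional (for p_U(u) > 0), with model marginal q_V(v) := Σ_u q_U(u)·p(v|u); assume q_V(v) > 0 whenever p_V(v) > 0. Then CI(U,V) = I(U,V) + D(p_V‖q_V); in particular I(U,V) ≤ CI(U,V), with equality if and only if q_V = p_V. -/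
open Finset

/-! With the exact conditional, on the support of `p`
`q(u,v) / (q_U(u) q_V(v)) = p(u,v) / (p_U(u) p_V(v)) · p_V(v) / q_V(v)`, so `CI = I + D(p_V‖q_V)`.
Gibbs' inequality, in the form `a log(a/b) - (a - b) = b · klFun(a/b) ≥ 0` summed over `v`, gives
`D(p_V‖q_V) ≥ 0` with equality only for `q_V = p_V`. It applies because `q_V` has total mass at
most one: its mass is the `q_U`-mass of the support of `p_U`. -/

open InformationTheory (klFun klFun_apply klFun_zero klFun_nonneg klFun_eq_zero_iff)

lemma mul_log_div_sub_sub_eq_mul_klFun {a b : ℝ} (hab : b = 0 → a = 0) :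
    a * Real.log (a / b) - (a - b) = b * klFun (a / b) := by
  rcases eq_or_ne b 0 with rfl | hb
  · simp [hab rfl]
  · rw [klFun_apply]
    field_simp
    ring

lemma mul_klFun_div_nonneg {a b : ℝ} (ha : 0 ≤ a) (hb : 0 ≤ b) : 0 ≤ b * klFun (a / b) :=
  mul_nonneg hb (klFun_nonneg (div_nonneg ha hb))

lemma eq_zero_of_eq_zero_of_pos_imp_pos {X : Type*} {p q : X → ℝ} (hp : ∀ x, 0 ≤ p x)
    (hpq : ∀ x, 0 < p x → 0 < q x) (x : X) (hx : q x = 0) : p x = 0 :=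
  (hp x).eq_or_lt.elim Eq.symm fun h => absurd hx (hpq x h).ne'

section Gibbs

variable {X : Type*} [Fintype X] {p q : X → ℝ}

lemma klDiv_sub_eq_sum_mul_klFun (hpq : ∀ x, q x = 0 → p x = 0) :
    klDiv p q - (∑ x, p x - ∑ x, q x) = ∑ x, q x * klFun (p x / q x) := by
  rw [klDiv, ← sum_sub_distrib, ← sum_sub_distrib]
  exact sum_congr rfl fun x _ => mul_log_div_sub_sub_eq_mul_klFun (hpq x)

lemma sum_mul_klFun_nonneg (hp : ∀ x, 0 ≤ p x) (hq : ∀ x, 0 ≤ q x) :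
    0 ≤ ∑ x, q x * klFun (p x / q x) :=
  sum_nonneg fun x _ => mul_klFun_div_nonneg (hp x) (hq x)

lemma klDiv_nonneg_of_sum_le (hp : ∀ x, 0 ≤ p x) (hq : ∀ x, 0 ≤ q x)
    (hpq : ∀ x, 0 < p x → 0 < q x) (hsum : ∑ x, q x ≤ ∑ x, p x) : 0 ≤ klDiv p q := by
  have := klDiv_sub_eq_sum_mul_klFun (eq_zero_of_eq_zero_of_pos_imp_pos hp hpq)
  linarith [sum_mul_klFun_nonneg hp hq]

lemma klDiv_eq_zero_iff_of_sum_le (hp : ∀ x, 0 ≤ p x) (hq : ∀ x, 0 ≤ q x)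
    (hpq : ∀ x, 0 < p x → 0 < q x) (hsum : ∑ x, q x ≤ ∑ x, p x) : klDiv p q = 0 ↔ q = p := by
  have hac := eq_zero_of_eq_zero_of_pos_imp_pos hp hpq
  refine ⟨fun hD => ?_, fun hqp => ?_⟩
  · have hzero : ∑ x, q x * klFun (p x / q x) = 0 := by
      linarith [klDiv_sub_eq_sum_mul_klFun hac, sum_mul_klFun_nonneg hp hq]
    have hterm :=
      (sum_eq_zero_iff_of_nonneg fun x _ => mul_klFun_div_nonneg (hp x) (hq x)).mp hzero
    funext x
    rcases mul_eq_zero.mp (hterm x (mem_univ x)) with hqx | hkl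
    · rw [hqx, hac x hqx]
    · have hqx := (hq x).lt_of_ne' fun h => by norm_num [h, klFun_zero] at hkl
      exact ((div_eq_one_iff_eq hqx.ne').mp
        ((klFun_eq_zero_iff (div_nonneg (hp x) hqx.le)).mp hkl)).symm
  · subst hqp
    refine sum_eq_zero fun x _ => ?_
    rcases eq_or_ne (q x) 0 with h | h <;> simp [h]

end Gibbs

section Marginals

variable {U V : Type*} {p : U × V → ℝ} {pU : U → ℝ} {pV : V → ℝ}

lemma le_marginal_fst [Fintype V] (hp0 : ∀ uv, 0 ≤ p uv) (hpU : ∀ u, pU u = ∑ v, p (u, v))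
    (uv : U × V) :
    p uv ≤ pU uv.1 :=
  (hpU uv.1).symm ▸ single_le_sum (fun v _ => hp0 (uv.1, v)) (mem_univ uv.2)

lemma le_marginal_snd [Fintype U] (hp0 : ∀ uv, 0 ≤ p uv) (hpV : ∀ v, pV v = ∑ u, p (u, v))
    (uv : U × V) :
    p uv ≤ pV uv.2 :=
  (hpV uv.2).symm ▸ single_le_sum (fun u _ => hp0 (u, uv.2)) (mem_univ uv.1)

lemma sum_mul_comp_snd_eq_sum_marginal [Fintype U] [Fintype V] (hpV : ∀ v, pV v = ∑ u, p (u, v))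
    (f : V → ℝ) :
    ∑ uv, p uv * f uv.2 = ∑ v, pV v * f v := by
  simp only [Fintype.sum_prod_type_right, ← sum_mul, hpV]

lemma sum_mixture_le [Fintype U] [Fintype V] (hpU : ∀ u, pU u = ∑ v, p (u, v))
    {qU : U → ℝ} (hqU0 : ∀ u, 0 ≤ qU u) :
    ∑ v, ∑ u, qU u * (p (u, v) / pU u) ≤ ∑ u, qU u := by
  rw [sum_comm]
  refine sum_le_sum fun u _ => ?_
  rw [← mul_sum, ← sum_div, ← hpU]
  exact mul_le_of_le_one_right (hqU0 u) (div_self_le_one _)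

end Marginals

lemma log_exact_conditional_ratio {p pu pv qu qv : ℝ} (hp : p ≠ 0) (hpu : pu ≠ 0) (hpv : pv ≠ 0)
    (hqu : qu ≠ 0) (hqv : qv ≠ 0) :
    Real.log (qu * (p / pu) / (qu * qv)) = Real.log (p / (pu * pv)) + Real.log (pv / qv) := by
  rw [← Real.log_mul (by positivity) (by positivity)]
  congr 1
  field_simp

theorem crossInfo_eq_mutualInfo_add_klDiv {U V : Type*} [Fintype U] [Fintype V]
    {p : U × V → ℝ} {pU : U → ℝ} {pV : V → ℝ} {qU : U → ℝ} {q : U × V → ℝ} {qV : V → ℝ}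
    (hp0 : ∀ uv, 0 ≤ p uv)
    (hpU : ∀ u, pU u = ∑ v, p (u, v)) (hpV : ∀ v, pV v = ∑ u, p (u, v))
    (hqUpos : ∀ u, 0 < pU u → 0 < qU u)
    (hq : ∀ uv : U × V, q uv = qU uv.1 * (p uv / pU uv.1))
    (hqVpos : ∀ v, 0 < pV v → 0 < qV v) :
    crossInfo p q qU qV = mutualInfo p pU pV + klDiv pV qV := by
  rw [klDiv, ← sum_mul_comp_snd_eq_sum_marginal hpV, mutualInfo, ← sum_add_distrib]
  refine sum_congr rfl fun uv _ => ?_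
  rcases (hp0 uv).eq_or_lt with h | h
  · simp [← h]
  have hpu := h.trans_le (le_marginal_fst hp0 hpU uv)
  have hpv := h.trans_le (le_marginal_snd hp0 hpV uv)
  rw [hq, log_exact_conditional_ratio h.ne' hpu.ne' hpv.ne' (hqUpos _ hpu).ne'
    (hqVpos _ hpv).ne', mul_add]

theorem mutualInfo_le_crossInfo_of_exact_conditional {U V : Type*} [Fintype U] [Fintype V]
    (p : U × V → ℝ) (pU : U → ℝ) (pV : V → ℝ)
    (hp0 : ∀ uv, 0 ≤ p uv) (hp1 : ∑ uv : U × V, p uv = 1)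
    (hpU : ∀ u, pU u = ∑ v, p (u, v)) (hpV : ∀ v, pV v = ∑ u, p (u, v))
    (qU : U → ℝ) (hqU0 : ∀ u, 0 ≤ qU u) (hqU1 : ∑ u, qU u = 1)
    (hqUpos : ∀ u, 0 < pU u → 0 < qU u)
    (q : U × V → ℝ) (hq : ∀ uv : U × V, q uv = qU uv.1 * (p uv / pU uv.1))
    (qV : V → ℝ) (hqV : ∀ v, qV v = ∑ u, qU u * (p (u, v) / pU u))
    (hqVpos : ∀ v, 0 < pV v → 0 < qV v) :
    crossInfo p q qU qV = mutualInfo p pU pV + klDiv pV qV ∧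
      mutualInfo p pU pV ≤ crossInfo p q qU qV ∧
      (crossInfo p q qU qV = mutualInfo p pU pV ↔ qV = pV) := by
  have hsplit := crossInfo_eq_mutualInfo_add_klDiv hp0 hpU hpV hqUpos hq hqVpos
  have hpU0 (u : U) : 0 ≤ pU u := hpU u ▸ sum_nonneg fun v _ => hp0 (u, v)
  have hpV0 (v : V) : 0 ≤ pV v := hpV v ▸ sum_nonneg fun u _ => hp0 (u, v)
  have hqV0 (v : V) : 0 ≤ qV v :=
    hqV v ▸ sum_nonneg fun u _ => mul_nonneg (hqU0 u) (div_nonneg (hp0 (u, v)) (hpU0 u))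
  have hsum : ∑ v, qV v ≤ ∑ v, pV v :=
    calc ∑ v, qV v = ∑ v, ∑ u, qU u * (p (u, v) / pU u) := sum_congr rfl fun v _ => hqV v
      _ ≤ ∑ u, qU u := sum_mixture_le hpU hqU0
      _ = ∑ uv, p uv := hqU1.trans hp1.symm
      _ = ∑ v, pV v := by simpa using sum_mul_comp_snd_eq_sum_marginal hpV fun _ => 1
  refine ⟨hsplit, ?_, ?_⟩
  · linarith [klDiv_nonneg_of_sum_le hpV0 hqV0 hqVpos hsum]
  · rw [hsplit, add_eq_left]
    exact klDiv_eq_zero_iff_of_sum_le hpV0 hqV0 hqVpos hsum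
end

section
/- Let d ≥ 1, σ > 0, Δ > 0, let ι be a finite nonempty index type, let w : ι → EuclideanSpace ℝ (Fin d) be points satisfying ‖w i − w j‖ ≥ Δ for all i ≠ j, and let P : ι → ℝ be nonnegative weights with Σ_i P i = 1. For each j define the dequantized probability estimate Q̃ j := Σ_i P i · exp(−‖w j − w i‖² / (2σ²)) (this equals (Σ_i P i · N(w j − w i; 0, σ²I)) / N(0; 0, σ²I), since the Gaussian normalization constant (2πσ²)^{−d/2} cancels). Then for every j: P j ≤ Q̃ j ≤ P j + (1 − P j)·exp(−Δ² / (2σ²)); in particular the dequantization error ΔP j := Q̃ j − P j satisfies 0 ≤ ΔP j ≤ exp(−Δ² / (2σ²)). -/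
/-! The `i = j` term of `Q̃ j` is exactly `P j` and every other term is nonnegative. By the
separation, each other Gaussian factor is at most `exp(−Δ²/(2σ²))`, and the weights it
multiplies have total mass `1 − P j`. -/

open Finset

section WeightedSum

variable {ι : Type*} [Fintype ι] (P k : ι → ℝ) (j : ι)

theorem le_sum_mul_of_apply_eq_one (hP0 : ∀ i, 0 ≤ P i) (hk0 : ∀ i, 0 ≤ k i) (hkj : k j = 1) :
    P j ≤ ∑ i, P i * k i := by
  simpa [hkj] using
    single_le_sum (f := fun i => P i * k i) (fun i _ => mul_nonneg (hP0 i) (hk0 i)) (mem_univ j)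

theorem sum_mul_le_add_one_sub_mul [DecidableEq ι] {E : ℝ} (hP0 : ∀ i, 0 ≤ P i)
    (hP1 : ∑ i, P i = 1) (hkj : k j = 1) (hkE : ∀ i ≠ j, k i ≤ E) :
    ∑ i, P i * k i ≤ P j + (1 - P j) * E := by
  have hrest : ∑ i ∈ univ.erase j, P i = 1 - P j := by
    rw [← hP1, ← add_sum_erase univ P (mem_univ j), add_sub_cancel_left]
  calc ∑ i, P i * k i = P j + ∑ i ∈ univ.erase j, P i * k i := by
        rw [← add_sum_erase _ _ (mem_univ j), hkj, mul_one]
    _ ≤ P j + ∑ i ∈ univ.erase j, P i * E := by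
        gcongr with i hi
        · exact hP0 i
        · exact hkE i (ne_of_mem_erase hi)
    _ = P j + (1 - P j) * E := by rw [← sum_mul, hrest]

end WeightedSum

theorem exp_neg_sq_div_le_of_le {Δ r : ℝ} (σ : ℝ) (hΔ : 0 ≤ Δ) (hr : Δ ≤ r) :
    Real.exp (-r ^ 2 / (2 * σ ^ 2)) ≤ Real.exp (-Δ ^ 2 / (2 * σ ^ 2)) := by
  gcongr

theorem gaussian_dequantization_error_bound_general
    {d : ℕ} (σ Δ : ℝ) (hΔ : 0 < Δ)
    {ι : Type*} [Fintype ι]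
    (w : ι → EuclideanSpace ℝ (Fin d))
    (hsep : ∀ i j : ι, i ≠ j → Δ ≤ ‖w i - w j‖)
    (P : ι → ℝ) (hP0 : ∀ i, 0 ≤ P i) (hP1 : ∑ i, P i = 1)
    (Q : ι → ℝ)
    (hQ : ∀ j, Q j = ∑ i, P i * Real.exp (-‖w j - w i‖ ^ 2 / (2 * σ ^ 2))) :
    ∀ j, P j ≤ Q j ∧ Q j ≤ P j + (1 - P j) * Real.exp (-Δ ^ 2 / (2 * σ ^ 2)) ∧
      0 ≤ Q j - P j ∧ Q j - P j ≤ Real.exp (-Δ ^ 2 / (2 * σ ^ 2)) := by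
  classical
  intro j
  set k := fun i => Real.exp (-‖w j - w i‖ ^ 2 / (2 * σ ^ 2))
  have hkj : k j = 1 := by simp [k]
  have hlow : P j ≤ Q j :=
    hQ j ▸ le_sum_mul_of_apply_eq_one P k j hP0 (fun _ => Real.exp_nonneg _) hkj
  have hup : Q j ≤ P j + (1 - P j) * Real.exp (-Δ ^ 2 / (2 * σ ^ 2)) :=
    hQ j ▸ sum_mul_le_add_one_sub_mul P k j hP0 hP1 hkj fun i hij =>
      exp_neg_sq_div_le_of_le σ hΔ.le (hsep j i hij.symm)
  refine ⟨hlow, hup, sub_nonneg.mpr hlow, ?_⟩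
  linarith [mul_nonneg (hP0 j) (Real.exp_nonneg (-Δ ^ 2 / (2 * σ ^ 2)))]

/-- Error bound for Gaussian dequantization: if quantization grid points `w i` are
separated by at least `Δ`, then the dequantized probability estimate
`Q̃ j = ∑ i, P i · exp(−‖w j − w i‖²/(2σ²))` satisfies
`P j ≤ Q̃ j ≤ P j + (1 − P j)·exp(−Δ²/(2σ²))`, so the dequantization error is
between `0` and `exp(−Δ²/(2σ²))`. -/
theorem gaussian_dequantization_error_bound
    {d : ℕ} (hd : 1 ≤ d) (σ Δ : ℝ) (hσ : 0 < σ) (hΔ : 0 < Δ)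
    {ι : Type*} [Fintype ι] [Nonempty ι]
    (w : ι → EuclideanSpace ℝ (Fin d))
    (hsep : ∀ i j : ι, i ≠ j → Δ ≤ ‖w i - w j‖)
    (P : ι → ℝ) (hP0 : ∀ i, 0 ≤ P i) (hP1 : ∑ i, P i = 1)
    (Q : ι → ℝ)
    (hQ : ∀ j, Q j = ∑ i, P i * Real.exp (-‖w j - w i‖ ^ 2 / (2 * σ ^ 2))) :
    ∀ j, P j ≤ Q j ∧ Q j ≤ P j + (1 - P j) * Real.exp (-Δ ^ 2 / (2 * σ ^ 2)) ∧
      0 ≤ Q j - P j ∧ Q j - P j ≤ Real.exp (-Δ ^ 2 / (2 * σ ^ 2)) :=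
  gaussian_dequantization_error_bound_general σ Δ hΔ w hsep P hP0 hP1 Q hQ
end
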